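/- arXiv:1307.0735 — 9 statements merged into one kernel-verified Lean document; each statement's English description precedes it below -/
import Mathlib

section
/- Let K be a compact metric space with base point 0 and let α ≥ 1 be an ordinal with 0 ∈ K^(α). Then the α-th Cantor–Bendixson derivative of the quotient metric space K/K^(α) is contained in {0}. -/
open Set Metric

/-- The `o`-th Cantor–Bendixson derivative of a set `A` in a topological space. -/
noncomputable def cbDeriv {X : Type*} [TopologicalSpace X] (A : Set X) (o : Ordinal) : Set X :=
  Ordinal.limitRecOn o A (fun _ S => derivedSet S)
    (fun o _ ih => ⋂ (b : {b : Ordinal // b < o}), ih b.1 b.2)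

lemma cbDeriv_zero {X : Type*} [TopologicalSpace X] (A : Set X) : cbDeriv A 0 = A :=
  Ordinal.limitRecOn_zero _ _ _

lemma cbDeriv_succ {X : Type*} [TopologicalSpace X] (A : Set X) (o : Ordinal) :
    cbDeriv A (Order.succ o) = derivedSet (cbDeriv A o) :=
  Ordinal.limitRecOn_succ _ _ _ _

lemma cbDeriv_limit {X : Type*} [TopologicalSpace X] (A : Set X) {o : Ordinal}
    (h : Order.IsSuccLimit o) : cbDeriv A o = ⋂ (b : {b : Ordinal // b < o}), cbDeriv A b.1 :=
  Ordinal.limitRecOn_limit _ _ _ _ h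

lemma cbDeriv_isClosed {X : Type*} [TopologicalSpace X] [T1Space X] {A : Set X}
    (hA : IsClosed A) (o : Ordinal) : IsClosed (cbDeriv A o) := by
  induction o using Ordinal.limitRecOn with
  | zero => rwa [cbDeriv_zero]
  | add_one o ih => rw [Ordinal.add_one_eq_succ, cbDeriv_succ]; exact isClosed_derivedSet _
  | limit o ho ih =>
    rw [cbDeriv_limit A ho]
    exact isClosed_iInter fun b => ih b.1 b.2

/-- Let `K` be a compact metric space with base point `zero`, `α ≥ 1` an ordinal with
`zero ∈ K^(α)`, and let `Q` be the quotient metric space `K/K^(α)`, i.e. a metric space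
identified with `(K \ K^(α)) ∪ {zero}` whose distance is given by the quotient formulas.
Then the `α`-th Cantor–Bendixson derivative of `Q` is contained in `{zero}`. -/
theorem cbDeriv_quotient_subset_singleton {K : Type*} [MetricSpace K] [CompactSpace K]
    (zero : K) (α : Ordinal) (hα : 1 ≤ α)
    (hz : zero ∈ cbDeriv (Set.univ : Set K) α)
    (Q : Type*) [MetricSpace Q]
    (e : ((Set.univ \ cbDeriv (Set.univ : Set K) α) ∪ {zero} : Set K) ≃ Q)
    (hdist0 : ∀ p : ((Set.univ \ cbDeriv (Set.univ : Set K) α) ∪ {zero} : Set K),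
      p.1 ≠ zero → dist (e p) (e ⟨zero, Or.inr rfl⟩) = infDist p.1 (cbDeriv (Set.univ : Set K) α))
    (hdist : ∀ p q : ((Set.univ \ cbDeriv (Set.univ : Set K) α) ∪ {zero} : Set K),
      p.1 ≠ zero → q.1 ≠ zero → p.1 ≠ q.1 →
      dist (e p) (e q) = min (dist p.1 q.1)
        (infDist p.1 (cbDeriv (Set.univ : Set K) α) + infDist q.1 (cbDeriv (Set.univ : Set K) α))) :
    cbDeriv (Set.univ : Set Q) α ⊆ {e ⟨zero, Or.inr rfl⟩} := by
  have hAc : IsClosed (cbDeriv (Set.univ : Set K) α) := cbDeriv_isClosed isClosed_univ α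
  have hAne : (cbDeriv (Set.univ : Set K) α).Nonempty := ⟨zero, hz⟩
  -- main claim by transfinite induction
  have main : ∀ β : Ordinal, ∀ q : Q, q ∈ cbDeriv (Set.univ : Set Q) β → q ≠ e ⟨zero, Or.inr rfl⟩ →
      (e.symm q).1 ∈ cbDeriv (Set.univ : Set K) β := by
    intro β
    induction β using Ordinal.limitRecOn with
    | zero => intro q _ _; rw [cbDeriv_zero]; trivial
    | add_one β ih =>
      intro q hq hqz
      rw [Ordinal.add_one_eq_succ] at hq ⊢
      rw [cbDeriv_succ] at hq ⊢
      set p := e.symm q with hp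
      have hpz : p.1 ≠ zero := by
        intro h
        apply hqz
        rw [← e.apply_symm_apply q]
        congr 1
        exact Subtype.ext h
      have hpA : p.1 ∉ cbDeriv (Set.univ : Set K) α := by
        rcases p.2 with h | h
        · exact h.2
        · exact absurd h hpz
      have hd : 0 < infDist p.1 (cbDeriv (Set.univ : Set K) α) :=
        (hAc.notMem_iff_infDist_pos hAne).1 hpA
      set d := infDist p.1 (cbDeriv (Set.univ : Set K) α) with hddef
      rw [mem_derivedSet, accPt_iff_nhds]
      intro U hU
      rcases Metric.mem_nhds_iff.1 hU with ⟨ε, hε, hball⟩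
      set δ := min ε (d / 2) with hδ
      have hδpos : 0 < δ := lt_min hε (by linarith)
      have hq' := accPt_iff_nhds.1 hq ((Metric.ball q δ) \ {e ⟨zero, Or.inr rfl⟩})
        (by
          refine mem_nhds_iff.2 ⟨(Metric.ball q δ) \ {e ⟨zero, Or.inr rfl⟩}, subset_rfl, ?_, ?_⟩
          · exact Metric.isOpen_ball.sdiff isClosed_singleton
          · exact ⟨Metric.mem_ball_self hδpos, hqz⟩)
      rcases hq' with ⟨q', ⟨⟨hq'ball, hq'z⟩, hq'S⟩, hq'q⟩
      have hq'z' : q' ≠ e ⟨zero, Or.inr rfl⟩ := hq'z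
      set p' := e.symm q' with hp'
      have hp'z : p'.1 ≠ zero := by
        intro h
        apply hq'z'
        rw [← e.apply_symm_apply q']
        congr 1
        exact Subtype.ext h
      have hp'mem : p'.1 ∈ cbDeriv (Set.univ : Set K) β := ih q' hq'S hq'z'
      have hne : p'.1 ≠ p.1 := by
        intro h
        apply hq'q
        rw [← e.apply_symm_apply q', ← e.apply_symm_apply q]
        congr 1
        exact Subtype.ext h
      have hdq : dist q' q = min (dist p'.1 p.1)
          (infDist p'.1 (cbDeriv (Set.univ : Set K) α) + infDist p.1 (cbDeriv (Set.univ : Set K) α)) := by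
        have := hdist p' p hp'z hpz hne
        rwa [e.apply_symm_apply, e.apply_symm_apply] at this
      rw [Metric.mem_ball, hdq] at hq'ball
      have hsum : d ≤ infDist p'.1 (cbDeriv (Set.univ : Set K) α) + infDist p.1 (cbDeriv (Set.univ : Set K) α) := by
        have : (0:ℝ) ≤ infDist p'.1 (cbDeriv (Set.univ : Set K) α) := infDist_nonneg
        rw [hddef]; linarith
      have hlt : dist p'.1 p.1 < δ := by
        rcases min_lt_iff.1 hq'ball with h | h
        · exact h
        · exfalso
          have : δ ≤ d / 2 := min_le_right _ _
          linarith
      refine ⟨p'.1, ⟨hball ?_, hp'mem⟩, hne⟩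
      exact Metric.mem_ball.2 (lt_of_lt_of_le hlt (min_le_left _ _))
    | limit β hβ ih =>
      intro q hq hqz
      rw [cbDeriv_limit _ hβ] at hq ⊢
      rw [mem_iInter] at hq ⊢
      intro b
      exact ih b.1 b.2 q (hq b) hqz
  intro q hq
  by_contra hqz
  rw [Set.mem_singleton_iff] at hqz
  have := main α q hq hqz
  rcases (e.symm q).2 with h | h
  · exact h.2 this
  · apply hqz
    rw [← e.apply_symm_apply q]
    congr 1
    exact Subtype.ext h
end

section
/- Let K be a compact pointed metric space (with base point 0) and let f : K → ℝ be a nonzero Lipschitz function vanishing at 0 such that for every ε > 0 there exists δ > 0 with |f(x) − f(y)| ≤ ε·d(x,y) whenever d(x,y) < δ. Then f attains its Lipschitz norm: there exist x ≠ y in K with |f(x) − f(y)| = ‖f‖_L · d(x,y), where ‖f‖_L = sup_{x≠y} |f(x)−f(y)|/d(x,y). -/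
open Set Metric

/-- A nonzero little Lipschitz function on a compact pointed metric space attains its
Lipschitz norm `‖f‖_L = sup_{x≠y} |f x - f y| / d(x,y)`. -/
theorem littleLipschitz_norm_attained {K : Type*} [MetricSpace K] [CompactSpace K]
    (zero : K) (f : K → ℝ) (hf0 : f zero = 0) (hfne : ∃ x, f x ≠ 0)
    (hLip : ∃ C : NNReal, LipschitzWith C f)
    (hlittle : ∀ ε > (0:ℝ), ∃ δ > (0:ℝ), ∀ x y, dist x y < δ → |f x - f y| ≤ ε * dist x y) :
    ∃ x y, x ≠ y ∧
      |f x - f y| = sSup {r : ℝ | ∃ z t, z ≠ t ∧ r = |f z - f t| / dist z t} * dist x y := by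
  obtain ⟨C, hC⟩ := hLip
  obtain ⟨x₀, hx₀⟩ := hfne
  set S : Set ℝ := {r : ℝ | ∃ z t, z ≠ t ∧ r = |f z - f t| / dist z t} with hS
  have hx0ne : x₀ ≠ zero := fun h => hx₀ (h ▸ hf0)
  have hdx0 : 0 < dist x₀ zero := dist_pos.mpr hx0ne
  have hmem0 : |f x₀ - f zero| / dist x₀ zero ∈ S := ⟨x₀, zero, hx0ne, rfl⟩
  have hbdd : BddAbove S := by
    refine ⟨C, fun r hr => ?_⟩
    obtain ⟨z, t, hzt, rfl⟩ := hr
    rw [div_le_iff₀ (dist_pos.mpr hzt)]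
    simpa [Real.dist_eq] using hC.dist_le_mul z t
  set L := sSup S with hL
  have hpos0 : 0 < |f x₀ - f zero| / dist x₀ zero := by
    apply div_pos _ hdx0
    rw [hf0, sub_zero]
    exact abs_pos.mpr hx₀
  have hLpos : 0 < L := lt_of_lt_of_le hpos0 (le_csSup hbdd hmem0)
  obtain ⟨δ, hδ, hδprop⟩ := hlittle (L / 2) (by linarith)
  -- compact set of pairs at distance ≥ δ
  set T : Set (K × K) := {p | δ ≤ dist p.1 p.2} with hT
  have hTclosed : IsClosed T := by
    have : Continuous fun p : K × K => dist p.1 p.2 := by fun_prop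
    exact isClosed_le continuous_const this
  have hTcompact : IsCompact T := hTclosed.isCompact
  -- there's an element of S exceeding L/2, and its pair lies in T
  obtain ⟨r, hrS, hrgt⟩ := exists_lt_of_lt_csSup ⟨_, hmem0⟩ (by linarith : L / 2 < L)
  obtain ⟨z₀, t₀, hzt₀, hr⟩ := hrS
  have hdz : 0 < dist z₀ t₀ := dist_pos.mpr hzt₀
  have hz₀T : (z₀, t₀) ∈ T := by
    by_contra h
    have hlt : dist z₀ t₀ < δ := lt_of_not_ge h
    have := hδprop z₀ t₀ hlt
    have : r ≤ L / 2 := by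
      rw [hr, div_le_iff₀ hdz]; linarith
    linarith
  -- maximize g on T
  set g : K × K → ℝ := fun p => |f p.1 - f p.2| / dist p.1 p.2 with hg
  have hgcont : ContinuousOn g T := by
    apply ContinuousOn.div
    · exact ((hC.continuous.comp continuous_fst).sub
        (hC.continuous.comp continuous_snd)).abs.continuousOn
    · exact (continuous_dist.comp (continuous_fst.prodMk continuous_snd)).continuousOn
    · intro p hp
      exact ne_of_gt (lt_of_lt_of_le hδ hp)
  obtain ⟨p, hpT, hpmax⟩ := hTcompact.exists_isMaxOn ⟨(z₀, t₀), hz₀T⟩ hgcont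
  have hdp : 0 < dist p.1 p.2 := lt_of_lt_of_le hδ hpT
  have hpne : p.1 ≠ p.2 := dist_pos.mp hdp
  have hgpS : g p ∈ S := ⟨p.1, p.2, hpne, rfl⟩
  have hgp_gt : L / 2 < g p := lt_of_lt_of_le (by show L / 2 < |f z₀ - f t₀| / dist z₀ t₀; rw [← hr]; exact hrgt) (hpmax hz₀T)
  have hgpL : g p = L := by
    apply le_antisymm (le_csSup hbdd hgpS)
    apply csSup_le ⟨_, hmem0⟩
    rintro r' ⟨z, t, hzt, rfl⟩
    by_cases h : δ ≤ dist z t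
    · exact hpmax (a := (z, t)) h
    · have hlt : dist z t < δ := lt_of_not_ge h
      have hdzt : 0 < dist z t := dist_pos.mpr hzt
      have : |f z - f t| / dist z t ≤ L / 2 := by
        rw [div_le_iff₀ hdzt]
        exact (hδprop z t hlt).trans (by ring_nf; rfl)
      linarith
  refine ⟨p.1, p.2, hpne, ?_⟩
  have : |f p.1 - f p.2| = g p * dist p.1 p.2 := by
    rw [hg]; field_simp
  rw [this, hgpL]
end

section
/- Let (K,d) be a countable compact pointed metric space. Then the little Lipschitz functions separate points uniformly: there is a constant c ≥ 1 (one may take c = 2·∏_{j=1}^{∞}(1 + 1/(2^j − 1))) such that for all x, y ∈ K there exists h ∈ lip₀(K) with ‖h‖_L ≤ c and |h(x) − h(y)| = d(x,y). -/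
open Set Metric MeasureTheory

lemma aux_mono (U : Set ℝ) {s t : ℝ} (h : t ≤ s) :
    (volume (Icc 0 t \ U)).toReal ≤ (volume (Icc 0 s \ U)).toReal := by
  apply ENNReal.toReal_mono
  · exact ((measure_mono diff_subset).trans_lt measure_Icc_lt_top).ne
  · exact measure_mono (diff_subset_diff_left (Icc_subset_Icc_right h))

lemma aux_lip (U : Set ℝ) {s t : ℝ} (h : t ≤ s) :
    (volume (Icc 0 s \ U)).toReal ≤ (volume (Icc 0 t \ U)).toReal + (s - t) := by
  have h1 : Icc 0 s \ U ⊆ (Icc 0 t \ U) ∪ Ioc t s := by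
    intro a ⟨⟨ha0, has⟩, haU⟩
    rcases le_or_gt a t with h' | h'
    · exact Or.inl ⟨⟨ha0, h'⟩, haU⟩
    · exact Or.inr ⟨h', has⟩
  have h2 : volume (Icc 0 s \ U) ≤ volume (Icc 0 t \ U) + ENNReal.ofReal (s - t) := by
    refine (measure_mono h1).trans ((measure_union_le _ _).trans ?_)
    rw [Real.volume_Ioc]
  have hfin : volume (Icc 0 t \ U) ≠ ⊤ :=
    ((measure_mono diff_subset).trans_lt measure_Icc_lt_top).ne
  calc (volume (Icc 0 s \ U)).toReal
      ≤ (volume (Icc 0 t \ U) + ENNReal.ofReal (s - t)).toReal :=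
        ENNReal.toReal_mono (by finiteness) h2
    _ = (volume (Icc 0 t \ U)).toReal + (s - t) := by
        rw [ENNReal.toReal_add hfin ENNReal.ofReal_ne_top,
          ENNReal.toReal_ofReal (by linarith)]

lemma aux_abs (U : Set ℝ) (s t : ℝ) :
    |(volume (Icc 0 s \ U)).toReal - (volume (Icc 0 t \ U)).toReal| ≤ |s - t| := by
  rcases le_total t s with h | h
  · rw [abs_of_nonneg (by linarith [aux_mono U h]), abs_of_nonneg (by linarith)]
    linarith [aux_lip U h]
  · rw [abs_of_nonpos (by linarith [aux_mono U h]), abs_of_nonpos (by linarith)]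
    linarith [aux_lip U h]

lemma aux_const (U : Set ℝ) {a δ s t : ℝ} (hsub : Ioo (a - δ) (a + δ) ⊆ U)
    (hs : s ∈ Ioo (a - δ) (a + δ)) (ht : t ∈ Ioo (a - δ) (a + δ)) :
    Icc 0 s \ U = Icc 0 t \ U := by
  have key : ∀ s t : ℝ, s ∈ Ioo (a - δ) (a + δ) → t ∈ Ioo (a - δ) (a + δ) →
      Icc 0 s \ U ⊆ Icc 0 t \ U := by
    intro s t hs ht b ⟨⟨hb0, hbs⟩, hbU⟩
    refine ⟨⟨hb0, ?_⟩, hbU⟩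
    by_contra hb
    push_neg at hb
    exact hbU (hsub ⟨lt_of_le_of_lt ht.1.le hb, lt_of_le_of_lt hbs hs.2⟩)
  exact subset_antisymm (key s t hs ht) (key t s ht hs)

lemma aux_vol {r : ℝ} (hr : 0 < r) (a : ℕ → ℝ) :
    volume (⋃ n : ℕ, Ioo (a n - r / 2 ^ (n + 4)) (a n + r / 2 ^ (n + 4)))
      ≤ ENNReal.ofReal (r / 4) := by
  refine (measure_iUnion_le _).trans ?_
  have h1 : ∀ n : ℕ, volume (Ioo (a n - r / 2 ^ (n + 4)) (a n + r / 2 ^ (n + 4)))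
      = ENNReal.ofReal (r / 8 * (1 / 2) ^ n) := by
    intro n
    rw [Real.volume_Ioo]
    congr 1
    rw [div_pow, one_pow]
    ring
  simp_rw [h1]
  rw [← ENNReal.ofReal_tsum_of_nonneg (fun n => by positivity)
    ((summable_geometric_two).mul_left _)]
  rw [tsum_mul_left, tsum_geometric_two]
  apply ENNReal.ofReal_le_ofReal
  linarith

/-- On a countable compact pointed metric space, the little Lipschitz functions separate
points uniformly: there is a constant `c ≥ 1` (one may take
`c = 2 ∏_{j≥1} (1 + 1/(2^j - 1))`) such that for all `x, y` some `h ∈ lip₀(K)` has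
Lipschitz norm at most `c` and `|h x - h y| = d(x,y)`. -/
theorem littleLipschitz_separates_uniformly {K : Type*} [MetricSpace K] [CompactSpace K]
    [Countable K] (zero : K) :
    ∃ c : ℝ, 1 ≤ c ∧ c = 2 * (∏' j : ℕ, ((1 : ℝ) + 1 / (2 ^ (j + 1) - 1))) ∧
      ∀ x y : K, ∃ h : K → ℝ, h zero = 0 ∧
        (∀ z t, |h z - h t| ≤ c * dist z t) ∧
        (∀ ε > (0:ℝ), ∃ δ > (0:ℝ), ∀ z t, dist z t < δ → |h z - h t| ≤ ε * dist z t) ∧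
        |h x - h y| = dist x y := by
  have hprod : (1:ℝ) ≤ ∏' j : ℕ, ((1 : ℝ) + 1 / (2 ^ (j + 1) - 1)) := by
    have hfac : ∀ j : ℕ, (1:ℝ) ≤ 1 + 1 / (2 ^ (j + 1) - 1) := by
      intro j
      have h2 : (2:ℝ) ≤ 2 ^ (j + 1) := by
        calc (2:ℝ) = 2 ^ 1 := by norm_num
        _ ≤ 2 ^ (j + 1) := by
          apply pow_le_pow_right₀ (by norm_num) (by omega)
      have h3 : (0:ℝ) < 2 ^ (j + 1) - 1 := by linarith
      have := le_of_lt (div_pos one_pos h3)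
      linarith
    by_cases hm : Multipliable fun j : ℕ => ((1 : ℝ) + 1 / (2 ^ (j + 1) - 1))
    · refine le_hasProd_of_le_prod hm.hasProd fun s => ?_
      calc (1:ℝ) = ∏ _i ∈ s, 1 := by simp
      _ ≤ _ := Finset.prod_le_prod (fun i _ => by norm_num) (fun i _ => hfac i)
    · rw [tprod_eq_one_of_not_multipliable hm]
  set c : ℝ := 2 * (∏' j : ℕ, ((1 : ℝ) + 1 / (2 ^ (j + 1) - 1))) with hcdef
  have hc2 : 2 ≤ c := by
    rw [hcdef]; linarith
  refine ⟨c, by linarith, rfl, ?_⟩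
  intro x y
  rcases eq_or_ne x y with rfl | hxy
  · refine ⟨0, rfl, fun z t => by simpa using mul_nonneg (by linarith) dist_nonneg,
      fun ε hε => ⟨1, one_pos, fun z t _ => by
        simpa using mul_nonneg hε.le dist_nonneg⟩, by simp⟩
  · set r : ℝ := dist x y with hrdef
    have hr : 0 < r := dist_pos.2 hxy
    have : Nonempty K := ⟨zero⟩
    obtain ⟨e, he⟩ := exists_surjective_nat K
    set U : Set ℝ := ⋃ n : ℕ,
      Ioo (dist (e n) x - r / 2 ^ (n + 4)) (dist (e n) x + r / 2 ^ (n + 4)) with hUdef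
    -- f
    set f : ℝ → ℝ := fun s => (volume (Icc 0 s \ U)).toReal with hfdef
    -- lower bound for f r
    have hfr : 3 * r / 4 ≤ f r := by
      have h1 : ENNReal.ofReal r ≤ volume (Icc 0 r \ U) + ENNReal.ofReal (r / 4) := by
        calc ENNReal.ofReal r = volume (Icc 0 r) := by
              rw [Real.volume_Icc, sub_zero]
        _ ≤ volume ((Icc 0 r \ U) ∪ U) := measure_mono (fun a ha => by
              by_cases h : a ∈ U
              · exact Or.inr h
              · exact Or.inl ⟨ha, h⟩)
        _ ≤ volume (Icc 0 r \ U) + volume U := measure_union_le _ _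
        _ ≤ _ := add_le_add le_rfl (aux_vol hr _)
      have hfin : volume (Icc 0 r \ U) ≠ ⊤ :=
        ((measure_mono diff_subset).trans_lt measure_Icc_lt_top).ne
      have h2 := ENNReal.toReal_mono
        (ENNReal.add_ne_top.2 ⟨hfin, ENNReal.ofReal_ne_top⟩) h1
      rw [ENNReal.toReal_ofReal hr.le,
        ENNReal.toReal_add hfin ENNReal.ofReal_ne_top,
        ENNReal.toReal_ofReal (by linarith)] at h2
      dsimp [f]
      linarith
    have hfrpos : 0 < f r := by linarith
    -- the function h
    set h : K → ℝ := fun z => (r / f r) * (f (dist z x) - f (dist zero x)) with hhdef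
    have hlip : ∀ z t : K, |h z - h t| ≤ c * dist z t := by
      intro z t
      have : h z - h t = (r / f r) * (f (dist z x) - f (dist t x)) := by
        dsimp [h]; ring
      rw [this, abs_mul, abs_of_nonneg (by positivity)]
      have h1 : |f (dist z x) - f (dist t x)| ≤ |dist z x - dist t x| := aux_abs U _ _
      have h2 : |dist z x - dist t x| ≤ dist z t := abs_dist_sub_le _ _ _
      have h3 : r / f r ≤ 2 := by
        rw [div_le_iff₀ hfrpos]; linarith
      calc r / f r * |f (dist z x) - f (dist t x)| ≤ (r / f r) * dist z t := by
            apply mul_le_mul_of_nonneg_left (h1.trans h2) (by positivity)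
      _ ≤ 2 * dist z t := mul_le_mul_of_nonneg_right h3 dist_nonneg
      _ ≤ c * dist z t := mul_le_mul_of_nonneg_right hc2 dist_nonneg
    -- local constancy
    have hloc : ∀ t : K, ∃ δ > (0:ℝ), ∀ z : K, dist z t < δ → h z = h t := by
      intro t
      obtain ⟨n, rfl⟩ := he t
      refine ⟨r / 2 ^ (n + 4), by positivity, fun z hz => ?_⟩
      have hsub : Ioo (dist (e n) x - r / 2 ^ (n + 4)) (dist (e n) x + r / 2 ^ (n + 4)) ⊆ U :=
        subset_iUnion (fun m => Ioo (dist (e m) x - r / 2 ^ (m + 4))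
          (dist (e m) x + r / 2 ^ (m + 4))) n
      have hmem : dist z x ∈ Ioo (dist (e n) x - r / 2 ^ (n + 4))
          (dist (e n) x + r / 2 ^ (n + 4)) := by
        have := abs_dist_sub_le z (e n) x
        rw [abs_le] at this
        constructor <;> [linarith [this.1]; linarith [this.2]]
      have hmem' : dist (e n) x ∈ Ioo (dist (e n) x - r / 2 ^ (n + 4))
          (dist (e n) x + r / 2 ^ (n + 4)) := by
        have hp : (0:ℝ) < r / 2 ^ (n + 4) := by positivity
        constructor <;> linarith
      have : f (dist z x) = f (dist (e n) x) := by
        dsimp [f]; rw [aux_const U hsub hmem hmem']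
      dsimp [h]; rw [this]
    -- uniform local constancy via Lebesgue number lemma
    have hunif : ∃ δ > (0:ℝ), ∀ z t : K, dist z t < δ → h z = h t := by
      choose ρ hρpos hρ using hloc
      have hcov : (univ : Set K) ⊆ ⋃ t : K, ball t (ρ t) :=
        fun t _ => mem_iUnion.2 ⟨t, mem_ball_self (hρpos t)⟩
      obtain ⟨δ, hδpos, hδ⟩ := lebesgue_number_lemma_of_metric isCompact_univ
        (fun t => isOpen_ball) hcov
      refine ⟨δ, hδpos, fun z t hzt => ?_⟩
      obtain ⟨i, hi⟩ := hδ z (mem_univ z)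
      have hz : z ∈ ball i (ρ i) := hi (mem_ball_self hδpos)
      have ht : t ∈ ball i (ρ i) := hi (by rwa [mem_ball, dist_comm])
      rw [hρ i z (mem_ball.1 hz), hρ i t (mem_ball.1 ht)]
    obtain ⟨δ₀, hδ₀pos, hδ₀⟩ := hunif
    refine ⟨h, by dsimp [h]; ring, hlip, fun ε hε => ⟨δ₀, hδ₀pos, fun z t hzt => ?_⟩, ?_⟩
    · rw [hδ₀ z t hzt, sub_self, abs_zero]
      exact mul_nonneg hε.le dist_nonneg
    · have hf0 : f 0 = 0 := by
        dsimp [f]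
        rw [Icc_self]
        have : volume ({(0:ℝ)} \ U) ≤ volume ({(0:ℝ)} : Set ℝ) := measure_mono diff_subset
        simp only [Real.volume_singleton, nonpos_iff_eq_zero] at this
        rw [this, ENNReal.toReal_zero]
      have h1 : h x - h y = (r / f r) * (f (dist x x) - f (dist y x)) := by
        dsimp [h]; ring
      rw [h1, dist_self, hf0, dist_comm y x, ← hrdef, zero_sub, abs_mul, abs_neg,
        abs_of_nonneg (by positivity), abs_of_nonneg hfrpos.le,
        div_mul_cancel₀ _ hfrpos.ne']
end

section
/- Let K be a compact pointed metric space, x ∈ K, and φ : [0,∞) → [0,∞) a piecewise affine continuous function that is constant on each member of a finite family of open intervals covering, up to a finite set, the range of d(·,x), with all slopes bounded by L. If the set C = { z ∈ K : d(z,x) lies outside the union of those open intervals } is finite, then the function h(z) = φ(d(z,x)) − φ(d(0,x)) belongs to lip₀(K), i.e., h(0)=0, h is Lipschitz with constant at most L, and for every ε>0 there is δ>0 with |h(z)−h(t)| ≤ ε d(z,t) whenever d(z,t)<δ. -/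
open Set Metric

lemma finite_range_comp_dist {K : Type*} [MetricSpace K] (x : K) (φ : ℝ → ℝ)
    (n : ℕ) (a b : Fin n → ℝ)
    (hconst : ∀ i, ∀ s ∈ Set.Ioo (a i) (b i), ∀ t ∈ Set.Ioo (a i) (b i), φ s = φ t)
    (hC : {z : K | dist z x ∉ ⋃ i, Set.Ioo (a i) (b i)}.Finite) :
    (Set.range fun z : K => φ (dist z x)).Finite := by
  have hsub : (Set.range fun z : K => φ (dist z x)) ⊆
      ((fun z : K => φ (dist z x)) '' {z : K | dist z x ∉ ⋃ i, Set.Ioo (a i) (b i)}) ∪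
      (Set.range fun i : Fin n => φ ((a i + b i) / 2)) := by
    rintro y ⟨z, rfl⟩
    by_cases hz : dist z x ∈ ⋃ i, Set.Ioo (a i) (b i)
    · obtain ⟨_, ⟨i, rfl⟩, hzi⟩ := hz
      right
      refine ⟨i, ?_⟩
      have hab : a i < b i := lt_trans hzi.1 hzi.2
      have hmid : (a i + b i) / 2 ∈ Set.Ioo (a i) (b i) := by
        constructor <;> [linarith; linarith]
      exact (hconst i _ hmid _ hzi)
    · exact Or.inl ⟨z, hz, rfl⟩
  exact ((hC.image _).union (Set.finite_range _)).subset hsub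

lemma finite_exists_sep {S : Set ℝ} (hS : S.Finite) :
    ∃ m > (0:ℝ), ∀ u ∈ S, ∀ v ∈ S, dist u v < m → u = v := by
  classical
  set F : Finset ℝ := hS.toFinset with hF
  set D : Finset ℝ := (F.offDiag).image (fun p => dist p.1 p.2) with hD
  by_cases hDe : D = ∅
  · refine ⟨1, one_pos, fun u hu v hv _ => ?_⟩
    by_contra hne
    have : (u, v) ∈ F.offDiag := by
      simp [Finset.mem_offDiag, hF, hS.mem_toFinset.2 hu, hS.mem_toFinset.2 hv,
        hS.mem_toFinset, hu, hv, hne]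
    have : dist u v ∈ D := Finset.mem_image.2 ⟨(u, v), this, rfl⟩
    simp [hDe] at this
  · have hne : D.Nonempty := Finset.nonempty_of_ne_empty hDe
    refine ⟨D.min' hne, ?_, ?_⟩
    · obtain ⟨p, hp, hpe⟩ := Finset.mem_image.1 (D.min'_mem hne)
      rw [Finset.mem_offDiag] at hp
      rw [← hpe]
      exact dist_pos.2 hp.2.2
    · intro u hu v hv hlt
      by_contra hne'
      have hmem : dist u v ∈ D := by
        refine Finset.mem_image.2 ⟨(u, v), ?_, rfl⟩
        simp [Finset.mem_offDiag, hF, hS.mem_toFinset, hu, hv, hne']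
      exact absurd (D.min'_le _ hmem) (not_le.2 hlt)

/-- Let `K` be a compact pointed metric space, `x ∈ K`, and `φ : ℝ → ℝ` a continuous
function, Lipschitz with constant `L`, which is constant on each of finitely many open
intervals `(a i, b i)`. If the exceptional set
`C = { z ∈ K : d(z,x) ∉ ⋃ i (a i, b i) }` is finite, then
`h(z) = φ(d(z,x)) - φ(d(0,x))` belongs to `lip₀(K)`: it vanishes at the base point, is
Lipschitz with constant at most `L`, and is little Lipschitz. -/
theorem piecewise_affine_comp_dist_littleLipschitz {K : Type*} [MetricSpace K]
    [CompactSpace K] (zero x : K) (L : NNReal) (φ : ℝ → ℝ)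
    (hφcont : Continuous φ) (hφLip : LipschitzWith L φ)
    (n : ℕ) (a b : Fin n → ℝ)
    (hconst : ∀ i, ∀ s ∈ Set.Ioo (a i) (b i), ∀ t ∈ Set.Ioo (a i) (b i), φ s = φ t)
    (hC : {z : K | dist z x ∉ ⋃ i, Set.Ioo (a i) (b i)}.Finite) :
    (fun z => φ (dist z x) - φ (dist zero x)) zero = 0 ∧
    LipschitzWith L (fun z => φ (dist z x) - φ (dist zero x)) ∧
    (∀ ε > (0:ℝ), ∃ δ > (0:ℝ), ∀ z t : K, dist z t < δ →
      |(φ (dist z x) - φ (dist zero x)) - (φ (dist t x) - φ (dist zero x))| ≤ ε * dist z t) := by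
  refine ⟨by simp, ?_, ?_⟩
  · have h1 : LipschitzWith 1 (fun z : K => dist z x) := LipschitzWith.dist_left x
    have h2 : LipschitzWith L (fun z : K => φ (dist z x)) := by
      simpa [Function.comp_def] using hφLip.comp h1
    refine LipschitzWith.of_dist_le_mul fun z t => ?_
    simpa [dist_sub_right] using h2.dist_le_mul z t
  · intro ε hε
    -- The function G has finite range and is uniformly continuous.
    have hfin := finite_range_comp_dist x φ n a b hconst hC
    obtain ⟨m, hm, hsep⟩ := finite_exists_sep hfin
    have hGcont : Continuous fun z : K => φ (dist z x) :=
      hφcont.comp (continuous_id.dist continuous_const)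
    have hGuc : UniformContinuous fun z : K => φ (dist z x) :=
      CompactSpace.uniformContinuous_of_continuous hGcont
    obtain ⟨δ, hδ, hδ'⟩ := Metric.uniformContinuous_iff.1 hGuc m hm
    refine ⟨δ, hδ, fun z t hzt => ?_⟩
    have heq : φ (dist z x) = φ (dist t x) :=
      hsep _ ⟨z, rfl⟩ _ ⟨t, rfl⟩ (hδ' hzt)
    have : (φ (dist z x) - φ (dist zero x)) - (φ (dist t x) - φ (dist zero x)) = 0 := by
      rw [heq]; ring
    rw [this, abs_zero]
    positivity
end

section
/- Let K be a compact pointed metric space and K = G₁ ∪ ⋯ ∪ Gₙ a partition into mutually disjoint nonempty clopen subsets, with 0 ∈ G₁. Let a = min_{i≠j} dist(Gᵢ,Gⱼ) > 0 and set Kᵢ = Gᵢ ∪ {0}. Then the restriction map Φ : Lip₀(K) → ⊕_{i=1}^n Lip₀(Kᵢ) (with the sup norm on the direct sum), Φ(f) = (f|_{Kᵢ})ᵢ, is a surjective linear map satisfying (a / (2·diam K))·‖f‖_L ≤ ‖Φ(f)‖_∞ ≤ ‖f‖_L for all f ∈ Lip₀(K). -/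
open Set Metric

/-- The Lipschitz seminorm of `f` restricted to a set `s`. -/
noncomputable def lipNormOn {K : Type*} [MetricSpace K] (f : K → ℝ) (s : Set K) : ℝ :=
  sSup {r : ℝ | ∃ x ∈ s, ∃ y ∈ s, x ≠ y ∧ r = |f x - f y| / dist x y}

lemma lipNormOn_nonneg {K : Type*} [MetricSpace K] (f : K → ℝ) (s : Set K) :
    0 ≤ lipNormOn f s := by
  apply Real.sSup_nonneg
  rintro r ⟨x, hx, y, hy, hxy, rfl⟩
  positivity

lemma lipNormOn_le {K : Type*} [MetricSpace K] {f : K → ℝ} {s : Set K} {M : ℝ} (hM : 0 ≤ M)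
    (h : ∀ x ∈ s, ∀ y ∈ s, x ≠ y → |f x - f y| / dist x y ≤ M) : lipNormOn f s ≤ M := by
  apply Real.sSup_le _ hM
  rintro r ⟨x, hx, y, hy, hxy, rfl⟩
  exact h x hx y hy hxy

lemma bddAbove_lip {K : Type*} [MetricSpace K] {f : K → ℝ} {C : NNReal}
    (hf : LipschitzWith C f) (s : Set K) :
    BddAbove {r : ℝ | ∃ x ∈ s, ∃ y ∈ s, x ≠ y ∧ r = |f x - f y| / dist x y} := by
  refine ⟨C, ?_⟩
  rintro r ⟨x, hx, y, hy, hxy, rfl⟩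
  rw [div_le_iff₀ (dist_pos.2 hxy)]
  have := hf.dist_le_mul x y
  rwa [Real.dist_eq] at this

lemma le_lipNormOn {K : Type*} [MetricSpace K] {f : K → ℝ} {C : NNReal}
    (hf : LipschitzWith C f) {s : Set K} {x y : K} (hx : x ∈ s) (hy : y ∈ s) (hxy : x ≠ y) :
    |f x - f y| / dist x y ≤ lipNormOn f s :=
  le_csSup (bddAbove_lip hf s) ⟨x, hx, y, hy, hxy, rfl⟩

/-- Let `K = G₁ ∪ ⋯ ∪ Gₙ` be a compact pointed metric space partitioned into mutually
disjoint nonempty clopen sets, with the base point in `G 0`, and let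
`a = min_{i≠j} dist(Gᵢ,Gⱼ) > 0`, `Kᵢ = Gᵢ ∪ {0}`. Then the restriction map
`Φ f = (f|_{Kᵢ})ᵢ` on `Lip₀(K)` is surjective onto `⊕ Lip₀(Kᵢ)` and satisfies
`(a/(2 diam K)) ‖f‖_L ≤ ‖Φ f‖_∞ = max_i ‖f|_{Kᵢ}‖_L ≤ ‖f‖_L`. -/
theorem restriction_map_clopen_partition {K : Type*} [MetricSpace K] [CompactSpace K]
    (zero : K) (n : ℕ) (hn : 0 < n) (G : Fin n → Set K)
    (hclopen : ∀ i, IsClopen (G i)) (hne : ∀ i, (G i).Nonempty)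
    (hdisj : ∀ i j, i ≠ j → Disjoint (G i) (G j))
    (hunion : (⋃ i, G i) = Set.univ) (hzero : zero ∈ G ⟨0, hn⟩)
    (a : ℝ)
    (ha : a = sInf {r : ℝ | ∃ i j, i ≠ j ∧ ∃ x ∈ G i, ∃ y ∈ G j, r = dist x y})
    (hapos : 0 < a) :
    -- surjectivity of the restriction map Φ
    (∀ g : Fin n → (K → ℝ), (∀ i, g i zero = 0) →
      (∀ i, ∃ C : NNReal, LipschitzOnWith C (g i) (G i ∪ {zero})) →
      ∃ f : K → ℝ, f zero = 0 ∧ (∃ C : NNReal, LipschitzWith C f) ∧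
        ∀ i, Set.EqOn f (g i) (G i ∪ {zero})) ∧
    -- the norm estimates for Φ
    (∀ f : K → ℝ, f zero = 0 → (∃ C : NNReal, LipschitzWith C f) →
      a / (2 * Metric.diam (Set.univ : Set K)) * lipNormOn f Set.univ ≤
        (⨆ i, lipNormOn f (G i ∪ {zero})) ∧
      ∀ i, lipNormOn f (G i ∪ {zero}) ≤ lipNormOn f Set.univ) := by
  set D := Metric.diam (Set.univ : Set K) with hD
  have hbdd : Bornology.IsBounded (Set.univ : Set K) := isCompact_univ.isBounded
  have hdist_le : ∀ x y : K, dist x y ≤ D :=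
    fun x y => Metric.dist_le_diam_of_mem hbdd (mem_univ x) (mem_univ y)
  have hD0 : 0 ≤ D := Metric.diam_nonneg
  have hmem : ∀ x : K, ∃ i, x ∈ G i := by
    intro x
    have : x ∈ ⋃ i, G i := hunion ▸ mem_univ x
    exact mem_iUnion.1 this
  choose idx hidx using hmem
  have hidx_eq : ∀ (i : Fin n) (x : K), x ∈ G i → idx x = i := by
    intro i x hx
    by_contra h
    exact Set.disjoint_left.1 (hdisj _ _ h) (hidx x) hx
  have ha_le : ∀ (i j : Fin n) (x y : K), i ≠ j → x ∈ G i → y ∈ G j → a ≤ dist x y := by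
    intro i j x y hij hx hy
    rw [ha]
    apply csInf_le
    · refine ⟨0, ?_⟩
      rintro r ⟨i, j, hij, x, hx, y, hy, rfl⟩
      exact dist_nonneg
    · exact ⟨i, j, hij, x, hx, y, hy, rfl⟩
  constructor
  · -- surjectivity
    intro g hg0 hgl
    choose C hC using hgl
    refine ⟨fun x => g (idx x) x, hg0 (idx zero), ?_, ?_⟩
    · -- Lipschitz
      set Cm : ℝ := ∑ i, (C i : ℝ) with hCm
      have hCm0 : 0 ≤ Cm := Finset.sum_nonneg fun i _ => (C i).coe_nonneg
      have hCm_le : ∀ i, (C i : ℝ) ≤ Cm := fun i =>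
        Finset.single_le_sum (fun j _ => (C j).coe_nonneg) (Finset.mem_univ i)
      set c : ℝ := Cm + 2 * Cm * D / a with hc
      have hc0 : 0 ≤ c := by positivity
      have hbound : ∀ x : K, |g (idx x) x| ≤ Cm * D := by
        intro x
        have h1 := (hC (idx x)).dist_le_mul x (Set.mem_union_left _ (hidx x)) zero
          (Set.mem_union_right _ rfl)
        rw [Real.dist_eq, hg0, sub_zero] at h1
        calc |g (idx x) x| ≤ (C (idx x) : ℝ) * dist x zero := h1
          _ ≤ Cm * D := mul_le_mul (hCm_le _) (hdist_le _ _) dist_nonneg hCm0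
      refine ⟨c.toNNReal, LipschitzWith.of_dist_le_mul fun x y => ?_⟩
      rw [Real.coe_toNNReal _ hc0]
      rcases eq_or_ne x y with rfl | hxy
      · simp
      rcases eq_or_ne (idx x) (idx y) with hij | hij
      · have h1 := (hC (idx x)).dist_le_mul x (Set.mem_union_left _ (hidx x)) y
          (Set.mem_union_left _ (hij ▸ hidx y))
        have h2 : g (idx y) y = g (idx x) y := by rw [hij]
        rw [h2]
        calc dist (g (idx x) x) (g (idx x) y) ≤ (C (idx x) : ℝ) * dist x y := h1
          _ ≤ c * dist x y := by
              apply mul_le_mul_of_nonneg_right _ dist_nonneg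
              calc (C (idx x) : ℝ) ≤ Cm := hCm_le _
                _ ≤ c := by
                    have h3 : 0 ≤ 2 * Cm * D / a := by positivity
                    rw [hc]; linarith
      · have hxy' : a ≤ dist x y := ha_le _ _ x y hij (hidx x) (hidx y)
        calc dist (g (idx x) x) (g (idx y) y)
            ≤ dist (g (idx x) x) 0 + dist 0 (g (idx y) y) := dist_triangle _ _ _
          _ = |g (idx x) x| + |g (idx y) y| := by
              rw [Real.dist_eq, Real.dist_eq, sub_zero, zero_sub, abs_neg]
          _ ≤ Cm * D + Cm * D := add_le_add (hbound x) (hbound y)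
          _ = (2 * Cm * D / a) * a := by field_simp; ring
          _ ≤ (2 * Cm * D / a) * dist x y := by
              apply mul_le_mul_of_nonneg_left hxy'; positivity
          _ ≤ c * dist x y := by
              apply mul_le_mul_of_nonneg_right _ dist_nonneg
              rw [hc]; nlinarith
    · -- EqOn
      intro i x hx
      rcases hx with hx | hx
      · show g (idx x) x = g i x
        rw [hidx_eq i x hx]
      · rw [Set.mem_singleton_iff] at hx
        subst hx
        show g (idx x) x = g i x
        rw [hg0, hg0]
  · -- norm estimates
    rintro f hf0 ⟨C, hC⟩
    set S : ℝ := ⨆ i, lipNormOn f (G i ∪ {zero}) with hS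
    have hS_le : ∀ i, lipNormOn f (G i ∪ {zero}) ≤ S := fun i =>
      le_ciSup (f := fun i => lipNormOn f (G i ∪ {zero}))
        (Set.Finite.bddAbove (Set.finite_range _)) i
    have hSnn : 0 ≤ S :=
      le_trans (lipNormOn_nonneg f (G ⟨0, hn⟩ ∪ {zero})) (hS_le ⟨0, hn⟩)
    have habs : ∀ (i : Fin n) (x : K), x ∈ G i → |f x| ≤ S * D := by
      intro i x hx
      rcases eq_or_ne x zero with rfl | hxz
      · rw [hf0, abs_zero]; exact mul_nonneg hSnn hD0
      · have h1 := le_lipNormOn (s := G i ∪ {zero}) hC (Set.mem_union_left _ hx)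
          (Set.mem_union_right (G i) rfl) hxz
        rw [hf0, sub_zero] at h1
        have h2 : |f x| = |f x| / dist x zero * dist x zero := by
          field_simp [dist_ne_zero.2 hxz]
        rw [h2]
        exact mul_le_mul (h1.trans (hS_le i)) (hdist_le _ _) dist_nonneg hSnn
    constructor
    · -- main estimate
      by_cases hn2 : ∃ i j : Fin n, i ≠ j
      · obtain ⟨i0, j0, hij0⟩ := hn2
        obtain ⟨x0, hx0⟩ := hne i0
        obtain ⟨y0, hy0⟩ := hne j0
        have haD : a ≤ D := (ha_le i0 j0 x0 y0 hij0 hx0 hy0).trans (hdist_le x0 y0)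
        have hDpos : 0 < D := lt_of_lt_of_le hapos haD
        have key : lipNormOn f Set.univ ≤ 2 * D / a * S := by
          apply lipNormOn_le (by positivity)
          intro x _ y _ hxy
          rcases eq_or_ne (idx x) (idx y) with hij | hij
          · have h1 := le_lipNormOn hC (Set.mem_union_left _ (hidx x))
              (Set.mem_union_left ({zero} : Set K) (hij ▸ hidx y)) hxy
            have h2 : lipNormOn f (G (idx x) ∪ {zero}) ≤ S := hS_le _
            calc |f x - f y| / dist x y ≤ S := h1.trans h2
              _ ≤ 2 * D / a * S := by
                  apply le_mul_of_one_le_left hSnn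
                  rw [le_div_iff₀ hapos]; linarith
          · have hxy' : a ≤ dist x y := ha_le _ _ x y hij (hidx x) (hidx y)
            have hnum : |f x - f y| ≤ 2 * S * D := by
              calc |f x - f y| ≤ |f x| + |f y| := abs_sub _ _
                _ ≤ S * D + S * D := add_le_add (habs _ x (hidx x)) (habs _ y (hidx y))
                _ = 2 * S * D := by ring
            calc |f x - f y| / dist x y ≤ 2 * S * D / a :=
                  div_le_div₀ (by positivity) hnum hapos hxy'
              _ = 2 * D / a * S := by ring
        have ha0 : a ≠ 0 := ne_of_gt hapos
        have hD0' : D ≠ 0 := ne_of_gt hDpos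
        calc a / (2 * D) * lipNormOn f Set.univ
            ≤ a / (2 * D) * (2 * D / a * S) := by
              apply mul_le_mul_of_nonneg_left key; positivity
          _ = S := by field_simp
      · exfalso
        have hempty : {r : ℝ | ∃ i j, i ≠ j ∧ ∃ x ∈ G i, ∃ y ∈ G j, r = dist x y} = ∅ := by
          ext r
          simp only [Set.mem_setOf_eq, Set.mem_empty_iff_false, iff_false]
          rintro ⟨i, j, hij, -⟩
          exact hn2 ⟨i, j, hij⟩
        rw [ha, hempty, Real.sInf_empty] at hapos
        exact lt_irrefl 0 hapos
    · -- each restriction norm is at most the full norm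
      intro i
      apply lipNormOn_le (lipNormOn_nonneg f Set.univ)
      intro x _ y _ hxy
      exact le_lipNormOn hC (mem_univ x) (mem_univ y) hxy
end

section
/- Let K be a compact pointed metric space and suppose that for some constant c ≥ 1 the little Lipschitz space lip₀(K) separates points uniformly: for all x,y ∈ K there is g ∈ lip₀(K) with ‖g‖_L ≤ c and |g(x)−g(y)| = d(x,y). Then for every finite subset F ⊆ K and every f ∈ Lip₀(K) there exists g ∈ lip₀(K) with ‖g‖_L ≤ c·‖f‖_L and g|_F = f|_F. -/
open Set Metric

private lemma abs_sup'_sub_sup'_le {ι : Type*} (s : Finset ι) (hs : s.Nonempty)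
    (u v : ι → ℝ) (M : ℝ) (h : ∀ i ∈ s, |u i - v i| ≤ M) :
    |s.sup' hs u - s.sup' hs v| ≤ M := by
  rw [abs_sub_le_iff]
  constructor
  · rw [sub_le_iff_le_add]
    apply Finset.sup'_le
    intro i hi
    have h1 := (abs_sub_le_iff.mp (h i hi)).1
    have h2 : v i ≤ s.sup' hs v := Finset.le_sup' v hi
    linarith
  · rw [sub_le_iff_le_add]
    apply Finset.sup'_le
    intro i hi
    have h1 := (abs_sub_le_iff.mp (h i hi)).2
    have h2 : u i ≤ s.sup' hs u := Finset.le_sup' u hi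
    linarith

private lemma abs_inf'_sub_inf'_le {ι : Type*} (s : Finset ι) (hs : s.Nonempty)
    (u v : ι → ℝ) (M : ℝ) (h : ∀ i ∈ s, |u i - v i| ≤ M) :
    |s.inf' hs u - s.inf' hs v| ≤ M := by
  rw [abs_sub_le_iff]
  constructor
  · have : s.inf' hs u - M ≤ s.inf' hs v := by
      apply Finset.le_inf'
      intro i hi
      have h1 := (abs_sub_le_iff.mp (h i hi)).1
      have h2 : s.inf' hs u ≤ u i := Finset.inf'_le u hi
      linarith
    linarith
  · have : s.inf' hs v - M ≤ s.inf' hs u := by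
      apply Finset.le_inf'
      intro i hi
      have h1 := (abs_sub_le_iff.mp (h i hi)).2
      have h2 : s.inf' hs v ≤ v i := Finset.inf'_le v hi
      linarith
    linarith

/-- If on a compact pointed metric space the little Lipschitz functions separate points
uniformly with constant `c ≥ 1`, then any `f ∈ Lip₀(K)` can be interpolated on any finite
set `F` by some `g ∈ lip₀(K)` with `‖g‖_L ≤ c ‖f‖_L`. -/
theorem littleLipschitz_finite_interpolation {K : Type*} [MetricSpace K] [CompactSpace K]
    (zero : K) (c : ℝ) (hc : 1 ≤ c)
    (hsep : ∀ x y : K, ∃ g : K → ℝ, g zero = 0 ∧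
      (∀ z t, |g z - g t| ≤ c * dist z t) ∧
      (∀ ε > (0:ℝ), ∃ δ > (0:ℝ), ∀ z t, dist z t < δ → |g z - g t| ≤ ε * dist z t) ∧
      |g x - g y| = dist x y) :
    ∀ (F : Finset K) (f : K → ℝ), f zero = 0 →
      ∀ L : ℝ, 0 ≤ L → (∀ z t, |f z - f t| ≤ L * dist z t) →
      ∃ g : K → ℝ, g zero = 0 ∧
        (∀ z t, |g z - g t| ≤ c * L * dist z t) ∧
        (∀ ε > (0:ℝ), ∃ δ > (0:ℝ), ∀ z t, dist z t < δ → |g z - g t| ≤ ε * dist z t) ∧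
        ∀ x ∈ F, g x = f x := by
  intro F f hf0 L hL hfL
  classical
  -- For each pair (x,y) build a little Lipschitz function matching f at x and y
  have key : ∀ x y : K, ∃ h : K → ℝ, h x = f x ∧ h y = f y ∧
      (∀ z t, |h z - h t| ≤ c * L * dist z t) ∧
      (∀ ε > (0:ℝ), ∃ δ > (0:ℝ), ∀ z t, dist z t < δ → |h z - h t| ≤ ε * dist z t) := by
    intro x y
    by_cases hxy : x = y
    · refine ⟨fun _ => f x, rfl, by rw [hxy], ?_, ?_⟩
      · intro z t
        simp only [sub_self, abs_zero]
        positivity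
      · intro ε hε
        exact ⟨1, one_pos, fun z t _ => by
          simp only [sub_self, abs_zero]; positivity⟩
    · obtain ⟨g, -, hglip, hglit, hgxy⟩ := hsep x y
      have hd : 0 < dist x y := dist_pos.mpr hxy
      have hgne : g x - g y ≠ 0 := by
        intro h0
        rw [h0, abs_zero] at hgxy
        exact hd.ne hgxy
      set a : ℝ := (f x - f y) / (g x - g y) with ha
      have haL : |a| ≤ L := by
        rw [ha, abs_div, hgxy, div_le_iff₀ hd]
        exact hfL x y
      refine ⟨fun z => a * (g z - g x) + f x, by ring, ?_, ?_, ?_⟩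
      · have : a * (g y - g x) = f y - f x := by
          rw [ha, div_mul_eq_mul_div, div_eq_iff hgne]
          ring
        show a * (g y - g x) + f x = f y
        rw [this]; ring
      · intro z t
        have : a * (g z - g x) + f x - (a * (g t - g x) + f x) = a * (g z - g t) := by ring
        rw [this, abs_mul]
        calc |a| * |g z - g t| ≤ L * (c * dist z t) := by
              apply mul_le_mul haL (hglip z t) (abs_nonneg _)
              exact hL
          _ = c * L * dist z t := by ring
      · intro ε hε
        obtain ⟨δ, hδpos, hδ⟩ := hglit (ε / (L + 1)) (by positivity)
        refine ⟨δ, hδpos, fun z t hzt => ?_⟩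
        have : a * (g z - g x) + f x - (a * (g t - g x) + f x) = a * (g z - g t) := by ring
        rw [this, abs_mul]
        calc |a| * |g z - g t| ≤ L * (ε / (L + 1) * dist z t) := by
              apply mul_le_mul haL (hδ z t hzt) (abs_nonneg _) hL
          _ ≤ ε * dist z t := by
              have hL1 : L + 1 ≠ 0 := by linarith
              rw [show L * (ε / (L + 1) * dist z t) = (L / (L + 1)) * (ε * dist z t) by
                field_simp]
              have h1 : L / (L + 1) ≤ 1 := by
                exact div_le_one_of_le₀ (by linarith) (by linarith)
              have h2 : (0:ℝ) ≤ ε * dist z t := by positivity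
              exact mul_le_of_le_one_left h2 h1
  choose h hhx hhy hhlip hhlit using key
  set F' : Finset K := insert zero F with hF'
  have hne : F'.Nonempty := ⟨zero, Finset.mem_insert_self _ _⟩
  refine ⟨fun z => F'.inf' hne (fun x => F'.sup' hne (fun y => h x y z)), ?_, ?_, ?_, ?_⟩
  · -- value at zero: reduces to the interpolation property below, proved inline
    have hz : zero ∈ F' := Finset.mem_insert_self _ _
    have : F'.inf' hne (fun x => F'.sup' hne (fun y => h x y zero)) = f zero := by
      apply le_antisymm
      · calc F'.inf' hne (fun x => F'.sup' hne (fun y => h x y zero))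
            ≤ F'.sup' hne (fun y => h zero y zero) := Finset.inf'_le _ hz
          _ ≤ f zero := Finset.sup'_le _ _ (fun y _ => le_of_eq (hhx zero y))
      · apply Finset.le_inf'
        intro x _
        calc f zero = h x zero zero := (hhy x zero).symm
          _ ≤ F'.sup' hne (fun y => h x y zero) := Finset.le_sup' (fun y => h x y zero) hz
    show F'.inf' hne (fun x => F'.sup' hne (fun y => h x y zero)) = 0
    rw [this, hf0]
  · intro z t
    apply abs_inf'_sub_inf'_le
    intro x _
    apply abs_sup'_sub_sup'_le
    intro y _
    exact hhlip x y z t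
  · intro ε hε
    have hp : ∀ p : K × K, ∃ δ > (0:ℝ), ∀ z t, dist z t < δ →
        |h p.1 p.2 z - h p.1 p.2 t| ≤ ε * dist z t := fun p => hhlit p.1 p.2 ε hε
    choose δf hδpos hδ using hp
    have hne2 : (F' ×ˢ F').Nonempty := hne.product hne
    refine ⟨(F' ×ˢ F').inf' hne2 δf, ?_, ?_⟩
    · exact (Finset.lt_inf'_iff _).mpr fun p _ => hδpos p
    · intro z t hzt
      apply abs_inf'_sub_inf'_le
      intro x hx
      apply abs_sup'_sub_sup'_le
      intro y hy
      have hmem : (x, y) ∈ F' ×ˢ F' := Finset.mem_product.mpr ⟨hx, hy⟩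
      have : dist z t < δf (x, y) := lt_of_lt_of_le hzt (Finset.inf'_le δf hmem)
      exact hδ (x, y) z t this
  · intro w hw
    have hw' : w ∈ F' := Finset.mem_insert_of_mem hw
    apply le_antisymm
    · calc F'.inf' hne (fun x => F'.sup' hne (fun y => h x y w))
          ≤ F'.sup' hne (fun y => h w y w) := Finset.inf'_le _ hw'
        _ ≤ f w := Finset.sup'_le _ _ (fun y _ => le_of_eq (hhx w y))
    · apply Finset.le_inf'
      intro x _
      calc f w = h x w w := (hhy x w).symm
        _ ≤ F'.sup' hne (fun y => h x y w) := Finset.le_sup' (fun y => h x y w) hw'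
end

section
/- Let K be a pointed metric space with base point 0, and for n ∈ ℤ define weight functions wₙ : K → ℝ by wₙ(x) = 0 if d(0,x) ≤ 2^{n−1} or d(0,x) ≥ 2^{n+1}, wₙ(x) = log₂ d(0,x) − (n−1) if 2^{n−1} < d(0,x) ≤ 2^n, and wₙ(x) = n+1 − log₂ d(0,x) if 2^n < d(0,x) < 2^{n+1}. Then ∑_{n∈ℤ} wₙ(x) = 1 for every x ≠ 0, and for every N ∈ ℕ the function W_N = ∑_{n=−N}^{N} wₙ is Lipschitz on K \ {0} and vanishes outside the annulus { x : 2^{−N−1} < d(0,x) < 2^{N+1} }. -/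
open Set Metric
open scoped Classical

-- log (max t c) is Lipschitz
private lemma kw_lip_logmax (c : ℝ) (hc : 0 < c) :
    ∃ C : NNReal, LipschitzWith C (fun t : ℝ => Real.log (max t c)) := by
  refine ⟨⟨c⁻¹, by positivity⟩, LipschitzWith.of_dist_le_mul fun a b => ?_⟩
  have key : ∀ u v : ℝ, Real.log (max u c) - Real.log (max v c) ≤ c⁻¹ * dist u v := by
    intro u v
    set A := max u c with hA'
    set B := max v c with hB'
    have hA : c ≤ A := le_max_right _ _
    have hB : c ≤ B := le_max_right _ _
    have hApos : 0 < A := lt_of_lt_of_le hc hA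
    have hBpos : 0 < B := lt_of_lt_of_le hc hB
    have h1 : Real.log A - Real.log B = Real.log (A / B) :=
      (Real.log_div hApos.ne' hBpos.ne').symm
    have h2 : Real.log (A / B) ≤ A / B - 1 :=
      Real.log_le_sub_one_of_pos (div_pos hApos hBpos)
    have h3 : A / B - 1 = (A - B) / B := by field_simp
    have h4 : (A - B) / B ≤ |A - B| / c := by
      rcases le_total A B with h | h
      · have hL : (A - B) / B ≤ 0 := div_nonpos_of_nonpos_of_nonneg (by linarith) hBpos.le
        have hR : 0 ≤ |A - B| / c := by positivity
        linarith
      · rw [abs_of_nonneg (by linarith : (0:ℝ) ≤ A - B), div_le_div_iff₀ hBpos hc]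
        nlinarith
    have h5 : |A - B| ≤ |u - v| := abs_max_sub_max_le_abs u v c
    have h6 : |A - B| / c ≤ c⁻¹ * dist u v := by
      rw [Real.dist_eq, div_eq_inv_mul]
      exact mul_le_mul_of_nonneg_left h5 (by positivity)
    linarith
  rw [Real.dist_eq, abs_sub_le_iff]
  constructor
  · exact key a b
  · have := key b a
    rw [dist_comm] at this
    exact this

private lemma kw_lip_logbmax (c : ℝ) (hc : 0 < c) :
    ∃ C : NNReal, LipschitzWith C (fun t : ℝ => Real.logb 2 (max t c)) := by
  obtain ⟨C, hC⟩ := kw_lip_logmax c hc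
  refine ⟨‖(Real.log 2)⁻¹‖₊ * C, ?_⟩
  have := (lipschitzWith_smul ((Real.log 2)⁻¹) (β := ℝ)).comp hC
  have heq : (fun t : ℝ => Real.logb 2 (max t c)) =
      ((fun x : ℝ => (Real.log 2)⁻¹ • x) ∘ fun t => Real.log (max t c)) := by
    funext t
    simp [Real.logb, div_eq_inv_mul, smul_eq_mul]
  rw [heq]
  exact this

-- sums of Lipschitz functions
private lemma kw_lip_sum {α : Type*} [PseudoMetricSpace α] (s : Finset ℤ) (f : ℤ → α → ℝ)
    (h : ∀ i ∈ s, ∃ C : NNReal, LipschitzWith C (f i)) :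
    ∃ C : NNReal, LipschitzWith C (fun x => ∑ i ∈ s, f i x) := by
  classical
  induction s using Finset.induction_on with
  | empty => exact ⟨0, by simpa using LipschitzWith.const (0:ℝ)⟩
  | @insert a s ha ih =>
      obtain ⟨C1, h1⟩ := h a (Finset.mem_insert_self a s)
      obtain ⟨C2, h2⟩ := ih (fun i hi => h i (Finset.mem_insert_of_mem hi))
      exact ⟨C1 + C2, by simpa [Finset.sum_insert ha] using h1.add h2⟩

/-- Kalton's weight functions: `wₙ(x)` vanishes off the annulus `2^{n-1} < d(0,x) < 2^{n+1}`,
equals `log₂ d(0,x) - (n-1)` on `2^{n-1} < d(0,x) ≤ 2^n` and `n+1 - log₂ d(0,x)` on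
`2^n < d(0,x) < 2^{n+1}`. They form a partition of unity on `K \ {0}`, and each partial sum
`W_N = ∑_{n=-N}^{N} wₙ` is Lipschitz on `K \ {0}` and vanishes outside the annulus
`2^{-N-1} < d(0,x) < 2^{N+1}`. -/
theorem kalton_weights {K : Type*} [MetricSpace K] (zero : K)
    (w : ℤ → K → ℝ)
    (hw : ∀ (n : ℤ) (x : K), w n x =
      if dist zero x ≤ (2:ℝ) ^ (n - 1) ∨ (2:ℝ) ^ (n + 1) ≤ dist zero x then 0
      else if dist zero x ≤ (2:ℝ) ^ n then Real.logb 2 (dist zero x) - (n - 1)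
      else (n + 1) - Real.logb 2 (dist zero x)) :
    (∀ x : K, x ≠ zero → ∑' n : ℤ, w n x = 1) ∧
    (∀ N : ℕ, (∃ C : NNReal,
        LipschitzOnWith C (fun x => ∑ n ∈ Finset.Icc (-(N:ℤ)) (N:ℤ), w n x)
          {x : K | x ≠ zero}) ∧
      ∀ x : K, (dist zero x ≤ (2:ℝ) ^ (-(N:ℤ) - 1) ∨ (2:ℝ) ^ ((N:ℤ) + 1) ≤ dist zero x) →
        (∑ n ∈ Finset.Icc (-(N:ℤ)) (N:ℤ), w n x) = 0) := by
  have h2 : (1:ℝ) < 2 := one_lt_two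
  -- conversions between zpow inequalities and logb
  have hle : ∀ (d : ℝ), 0 < d → ∀ m : ℤ, (d ≤ (2:ℝ) ^ m ↔ Real.logb 2 d ≤ m) := by
    intro d hd m
    rw [← Real.rpow_intCast 2 m, ← Real.logb_le_iff_le_rpow h2 hd]
  have hlt : ∀ (d : ℝ), 0 < d → ∀ m : ℤ, (d < (2:ℝ) ^ m ↔ Real.logb 2 d < m) := by
    intro d hd m
    rw [← Real.rpow_intCast 2 m, ← Real.logb_lt_iff_lt_rpow h2 hd]
  have hge : ∀ (d : ℝ), 0 < d → ∀ m : ℤ, ((2:ℝ) ^ m ≤ d ↔ (m:ℝ) ≤ Real.logb 2 d) := by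
    intro d hd m
    rw [← Real.rpow_intCast 2 m, ← Real.le_logb_iff_rpow_le h2 hd]
  have hgt : ∀ (d : ℝ), 0 < d → ∀ m : ℤ, ((2:ℝ) ^ m < d ↔ (m:ℝ) < Real.logb 2 d) := by
    intro d hd m
    rw [← Real.rpow_intCast 2 m, ← Real.lt_logb_iff_rpow_lt h2 hd]
  have hlogbz : ∀ m : ℤ, Real.logb 2 ((2:ℝ) ^ m) = m := by
    intro m
    rw [← Real.rpow_intCast 2 m, Real.logb_rpow (by norm_num) (by norm_num)]
  -- the real-variable profile of w n
  set G : ℤ → ℝ → ℝ := fun n t =>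
    max 0 (min (Real.logb 2 (max t ((2:ℝ) ^ (n - 1))) - ((n:ℝ) - 1))
      (((n:ℝ) + 1) - Real.logb 2 (max t ((2:ℝ) ^ (n - 1))))) with hG
  have hpoint : ∀ (n : ℤ) (x : K), w n x = G n (dist zero x) := by
    intro n x
    set d := dist zero x with hd'
    have hd0 : 0 ≤ d := dist_nonneg
    have hcpos : (0:ℝ) < (2:ℝ) ^ (n - 1) := by positivity
    rw [hw, hG]
    rcases le_or_gt d ((2:ℝ) ^ (n - 1)) with h1 | h1
    · -- small d : both sides zero
      rw [if_pos (Or.inl h1)]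
      have hmax : max d ((2:ℝ) ^ (n - 1)) = (2:ℝ) ^ (n - 1) := max_eq_right h1
      simp only [hmax, hlogbz (n - 1)]
      push_cast
      rw [min_eq_left (by linarith), max_eq_left (by linarith)]
    · -- d in the relevant range
      have hdpos : 0 < d := lt_trans hcpos h1
      have hmax : max d ((2:ℝ) ^ (n - 1)) = d := max_eq_left h1.le
      have hL1 : ((n:ℝ) - 1) < Real.logb 2 d := by
        have := (hgt d hdpos (n - 1)).1 h1
        push_cast at this; linarith
      simp only [hmax]
      rcases le_or_gt ((2:ℝ) ^ (n + 1)) d with h2' | h2'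
      · rw [if_pos (Or.inr h2')]
        have hL2 : ((n:ℝ) + 1) ≤ Real.logb 2 d := by
          have := (hge d hdpos (n + 1)).1 h2'
          push_cast at this; linarith
        rw [max_eq_left]
        exact le_trans (min_le_right _ _) (by linarith)
      · rw [if_neg (by push_neg; exact ⟨h1, h2'⟩)]
        have hL3 : Real.logb 2 d < (n:ℝ) + 1 := by
          have := (hlt d hdpos (n + 1)).1 h2'
          push_cast at this; linarith
        rcases le_or_gt d ((2:ℝ) ^ n) with h3 | h3
        · rw [if_pos h3]
          have hL4 : Real.logb 2 d ≤ (n:ℝ) := by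
            have := (hle d hdpos n).1 h3
            push_cast at this; linarith
          rw [min_eq_left (by linarith), max_eq_right (by linarith)]
        · rw [if_neg (not_le.2 h3)]
          have hL4 : (n:ℝ) < Real.logb 2 d := by
            have := (hgt d hdpos n).1 h3
            push_cast at this; linarith
          rw [min_eq_right (by linarith), max_eq_right (by linarith)]
  constructor
  · -- partition of unity
    intro x hx
    set d := dist zero x with hd'
    have hdpos : 0 < d := dist_pos.2 (Ne.symm hx)
    set L := Real.logb 2 d with hL'
    set n₀ : ℤ := ⌈L⌉ with hn₀
    have hdle : d ≤ (2:ℝ) ^ n₀ := (hle d hdpos n₀).2 (Int.le_ceil L)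
    have hdgt : (2:ℝ) ^ (n₀ - 1) < d := by
      rw [hgt d hdpos (n₀ - 1)]
      push_cast
      have := Int.ceil_lt_add_one L
      have : (n₀:ℝ) < L + 1 := by exact_mod_cast this
      linarith
    have hvanish : ∀ n : ℤ, n ∉ ({n₀ - 1, n₀} : Finset ℤ) → w n x = 0 := by
      intro n hn
      simp only [Finset.mem_insert, Finset.mem_singleton] at hn
      push_neg at hn
      rw [hw]
      rcases lt_or_ge n n₀ with h | h
      · have hn2 : n ≤ n₀ - 2 := by omega
        have : (2:ℝ) ^ (n + 1) ≤ (2:ℝ) ^ (n₀ - 1) :=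
          zpow_le_zpow_right₀ (by norm_num) (by omega)
        exact if_pos (Or.inr (le_trans this hdgt.le))
      · have hn2 : n₀ + 1 ≤ n := by omega
        have : (2:ℝ) ^ n₀ ≤ (2:ℝ) ^ (n - 1) :=
          zpow_le_zpow_right₀ (by norm_num) (by omega)
        exact if_pos (Or.inl (le_trans hdle this))
    rw [tsum_eq_sum hvanish, Finset.sum_pair (by omega : n₀ - 1 ≠ n₀)]
    have hwn₀ : w n₀ x = L - ((n₀:ℝ) - 1) := by
      have hA : ¬(dist zero x ≤ (2:ℝ) ^ (n₀ - 1) ∨ (2:ℝ) ^ (n₀ + 1) ≤ dist zero x) := by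
        push_neg
        exact ⟨hdgt, lt_of_le_of_lt hdle (zpow_lt_zpow_right₀ (by norm_num) (by omega))⟩
      rw [hw, if_neg hA, if_pos hdle]
    rcases le_or_gt ((2:ℝ) ^ n₀) d with h | h
    · have hdeq : d = (2:ℝ) ^ n₀ := le_antisymm hdle h
      have hLeq : L = (n₀:ℝ) := by rw [hL', hdeq, hlogbz]
      have hw1 : w (n₀ - 1) x = 0 := by
        rw [hw]; exact if_pos (Or.inr (by rw [sub_add_cancel]; exact h))
      rw [hw1, hwn₀, hLeq]; ring
    · have hw1 : w (n₀ - 1) x = (n₀:ℝ) - L := by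
        have hA : ¬(dist zero x ≤ (2:ℝ) ^ (n₀ - 1 - 1) ∨ (2:ℝ) ^ (n₀ - 1 + 1) ≤ dist zero x) := by
          push_neg
          refine ⟨lt_trans (zpow_lt_zpow_right₀ (by norm_num) (by omega)) hdgt, ?_⟩
          rw [sub_add_cancel]; exact h
        have hB : ¬(dist zero x ≤ (2:ℝ) ^ (n₀ - 1)) := not_le.2 hdgt
        rw [hw, if_neg hA, if_neg hB]
        push_cast; ring
      rw [hw1, hwn₀]; ring
  · intro N
    constructor
    · -- Lipschitz
      have hlipw : ∀ n : ℤ, ∃ C : NNReal, LipschitzWith C (w n) := by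
        intro n
        have hcpos : (0:ℝ) < (2:ℝ) ^ (n - 1) := by positivity
        obtain ⟨C, hC⟩ := kw_lip_logbmax ((2:ℝ) ^ (n - 1)) hcpos
        have hGlip : LipschitzWith ((C + 0) ⊔ (0 + C)) (G n) := by
          have h1 := hC.sub (LipschitzWith.const (((n:ℝ) - 1)))
          have h2 := (LipschitzWith.const (((n:ℝ) + 1))).sub hC
          exact (h1.min h2).const_max 0
        refine ⟨((C + 0) ⊔ (0 + C)) * 1, ?_⟩
        have heq : w n = fun x => G n (dist zero x) := funext (hpoint n)
        rw [heq]
        exact hGlip.comp (LipschitzWith.dist_right zero)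
      obtain ⟨C, hC⟩ := kw_lip_sum (Finset.Icc (-(N:ℤ)) (N:ℤ)) w (fun i _ => hlipw i)
      exact ⟨C, hC.lipschitzOnWith⟩
    · -- vanishing outside the annulus
      intro x hx
      refine Finset.sum_eq_zero fun n hn => ?_
      rw [Finset.mem_Icc] at hn
      rw [hw]
      rcases hx with h | h
      · refine if_pos (Or.inl (le_trans h ?_))
        exact zpow_le_zpow_right₀ (by norm_num) (by omega)
      · refine if_pos (Or.inr (le_trans ?_ h))
        exact zpow_le_zpow_right₀ (by norm_num) (by omega)
end

section
/- Let B be a metric space, A ⊆ B, and for each a ∈ A let L_a be a sequence of points converging to a with L_a contained in the open ball B(a, α/2), where α = min{ d(x,y) : x ≠ y ∈ B } > 0 and B is finite. Set K₀ = (⋃_{a∈A} L_a) ∪ B. Then the set of accumulation points of K₀ equals A, i.e., K₀' = A. -/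
open Set Metric Filter

lemma not_accPt_of_finite' {M : Type*} [MetricSpace M] {s : Set M} (hs : s.Finite) (x : M) :
    ¬ AccPt x (𝓟 s) := by
  rw [accPt_iff_nhds]
  push_neg
  refine ⟨(s \ {x})ᶜ, ?_, ?_⟩
  · exact ((hs.subset diff_subset).isClosed.isOpen_compl).mem_nhds (by simp)
  · rintro y ⟨hyU, hys⟩
    by_contra hne
    exact hyU ⟨hys, hne⟩

lemma not_accPt_of_nhds_inter_finite' {M : Type*} [MetricSpace M] {s U : Set M} {x : M}
    (hU : U ∈ nhds x) (h : (s ∩ U).Finite) : ¬ AccPt x (𝓟 s) := by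
  intro hacc
  apply not_accPt_of_finite' h x
  rw [accPt_iff_nhds] at hacc ⊢
  intro V hV
  obtain ⟨y, ⟨hyV, hys⟩, hne⟩ := hacc (V ∩ U) (inter_mem hV hU)
  exact ⟨y, ⟨hyV.1, hys, hyV.2⟩, hne⟩

/-- Let `B` be a finite subset of a metric space with minimal distance `α > 0` between
distinct points, `A ⊆ B`, and for each `a ∈ A` let `L a` be an (injective) sequence
converging to `a` contained in the ball `B(a, α/2)`. Then the set of accumulation points of
`K₀ = (⋃_{a∈A} L_a) ∪ B` is exactly `A`. -/
theorem derivedSet_union_sequences {M : Type*} [MetricSpace M]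
    (B : Set M) (hB : B.Finite) (A : Set M) (hAB : A ⊆ B)
    (α : ℝ) (hα : α = sInf {r : ℝ | ∃ x ∈ B, ∃ y ∈ B, x ≠ y ∧ r = dist x y})
    (hαpos : 0 < α)
    (L : M → ℕ → M)
    (hinj : ∀ a ∈ A, Function.Injective (L a))
    (htendsto : ∀ a ∈ A, Tendsto (L a) atTop (nhds a))
    (hball : ∀ a ∈ A, ∀ k, L a k ∈ Metric.ball a (α / 2)) :
    derivedSet ((⋃ a ∈ A, Set.range (L a)) ∪ B) = A := by
  have hA : A.Finite := hB.subset hAB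
  apply Set.Subset.antisymm
  · -- derivedSet ⊆ A
    intro x hx
    by_contra hxA
    -- find r > 0 with r ≤ dist x a for all a ∈ A
    obtain ⟨r, hr0, hr⟩ : ∃ r > 0, ∀ a ∈ A, r ≤ dist x a := by
      rcases A.eq_empty_or_nonempty with h | h
      · exact ⟨1, one_pos, by simp [h]⟩
      · obtain ⟨a0, ha0A, ha0⟩ := Set.exists_min_image A (dist x) hA h
        refine ⟨dist x a0, ?_, ha0⟩
        rw [gt_iff_lt, dist_pos]
        exact fun hxa => hxA (hxa ▸ ha0A)
    -- exceptional finite set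
    have hEfin : ∀ a ∈ A, {k | L a k ∉ ball a (r / 2)}.Finite := by
      intro a ha
      have h2 : ∀ᶠ k in atTop, L a k ∈ ball a (r / 2) :=
        (htendsto a ha) (ball_mem_nhds a (by positivity))
      rw [eventually_atTop] at h2
      obtain ⟨N, hN⟩ := h2
      apply (Set.finite_Iio N).subset
      intro k hk
      by_contra h
      simp only [Set.mem_Iio, not_lt] at h
      exact hk (hN k h)
    set F : Set M := B ∪ ⋃ a ∈ A, L a '' {k | L a k ∉ ball a (r / 2)} with hFdef
    have hFfin : F.Finite :=
      hB.union (hA.biUnion fun a ha => (hEfin a ha).image _)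
    have hsub : ((⋃ a ∈ A, Set.range (L a)) ∪ B) ∩ ball x (r / 2) ⊆ F := by
      rintro y ⟨hyK, hyball⟩
      rcases hyK with hy | hy
      · simp only [Set.mem_iUnion] at hy
        obtain ⟨a, ha, k, hk⟩ := hy
        right
        simp only [Set.mem_iUnion]
        refine ⟨a, ha, k, ?_, hk⟩
        intro hkball
        have : dist x a < r := by
          calc dist x a ≤ dist x y + dist y a := dist_triangle x y a
            _ < r / 2 + r / 2 := by
                rw [mem_ball] at hkball hyball
                rw [hk] at hkball
                rw [dist_comm x y]
                linarith
            _ = r := by ring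
        exact absurd (hr a ha) (not_le.mpr this)
      · exact Or.inl hy
    exact absurd hx
      (not_accPt_of_nhds_inter_finite' (ball_mem_nhds x (by positivity))
        (hFfin.subset hsub))
  · -- A ⊆ derivedSet
    intro a ha
    rw [mem_derivedSet, accPt_iff_nhds]
    intro U hU
    have h2 : ∀ᶠ k in atTop, L a k ∈ U := (htendsto a ha) hU
    rw [eventually_atTop] at h2
    obtain ⟨N, hN⟩ := h2
    have hmem : ∀ k, L a k ∈ (⋃ a ∈ A, Set.range (L a)) ∪ B := fun k =>
      Or.inl (Set.mem_biUnion ha ⟨k, rfl⟩)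
    by_cases hcase : L a N = a
    · refine ⟨L a (N + 1), ⟨hN (N + 1) (Nat.le_succ N), hmem _⟩, fun h => ?_⟩
      exact Nat.succ_ne_self N (hinj a ha (h.trans hcase.symm))
    · exact ⟨L a N, ⟨hN N le_rfl, hmem N⟩, hcase⟩
end

section
/- Let (Kₙ) be metric spaces with diam Kₙ ≤ 8^{−n}, and K = (⋃ₙ {n} × Kₙ) ∪ {0} the metric space with d(0,(n,x)) = 2^{−n}, d((n,x),(n,y)) = d_{Kₙ}(x,y), and d((n,x),(m,y)) = |2^{−n} − 2^{−m}| for n ≠ m. If each Kₙ satisfies Kₙ'' = ∅ and Kₙ' ≠ ∅ for infinitely many n, then K'' = {0} (and more generally K^(2) equals {0}). -/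
open Set Metric

lemma mem_derivedSet_metric {Y : Type*} [MetricSpace Y] {x : Y} {s : Set Y} :
    x ∈ derivedSet s ↔ ∀ ε > 0, ∃ y ∈ s, y ≠ x ∧ dist y x < ε := by
  rw [mem_derivedSet, accPt_iff_nhds]
  constructor
  · intro h ε hε
    obtain ⟨y, ⟨hy1, hy2⟩, hy3⟩ := h (ball x ε) (ball_mem_nhds x hε)
    exact ⟨y, hy2, hy3, by rwa [← mem_ball]⟩
  · intro h U hU
    obtain ⟨ε, hε, hb⟩ := Metric.mem_nhds_iff.1 hU
    obtain ⟨y, hy1, hy2, hy3⟩ := h ε hε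
    exact ⟨y, ⟨hb (by rwa [mem_ball]), hy1⟩, hy2⟩

lemma half_pow_mono {a b : ℕ} (h : a ≤ b) : (2:ℝ)⁻¹ ^ b ≤ (2:ℝ)⁻¹ ^ a :=
  pow_le_pow_of_le_one (by norm_num) (by norm_num) h

lemma half_pow_gap {n m : ℕ} (h : n ≠ m) :
    (2:ℝ)⁻¹ ^ (n + 1) ≤ |(2:ℝ)⁻¹ ^ n - (2:ℝ)⁻¹ ^ m| := by
  have hsucc : (2:ℝ)⁻¹ ^ (n + 1) = (2:ℝ)⁻¹ ^ n / 2 := by rw [pow_succ]; ring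
  rcases lt_or_gt_of_ne h with hlt | hlt
  · have h1 : (2:ℝ)⁻¹ ^ m ≤ (2:ℝ)⁻¹ ^ (n + 1) := half_pow_mono hlt
    have h2 : (0:ℝ) ≤ (2:ℝ)⁻¹ ^ n - (2:ℝ)⁻¹ ^ m := by
      have := half_pow_mono hlt.le
      linarith
    rw [abs_of_nonneg h2]
    linarith
  · have h1 : (2:ℝ)⁻¹ ^ n ≤ (2:ℝ)⁻¹ ^ (m + 1) := half_pow_mono hlt
    have hsucc' : (2:ℝ)⁻¹ ^ (m + 1) = (2:ℝ)⁻¹ ^ m / 2 := by rw [pow_succ]; ring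
    have h3 : (2:ℝ)⁻¹ ^ (n + 1) ≤ (2:ℝ)⁻¹ ^ (m + 1) :=
      half_pow_mono (Nat.succ_le_succ hlt.le)
    have h2 : (2:ℝ)⁻¹ ^ n - (2:ℝ)⁻¹ ^ m ≤ 0 := by
      have := half_pow_mono hlt.le
      linarith
    rw [abs_of_nonpos h2]
    linarith

/-- Let `Kₙ` be metric spaces with `diam Kₙ ≤ 8^{-n}`, and let `X` be the metric space
`K = (⋃ₙ {n} × Kₙ) ∪ {0}` with `d(0,(n,x)) = 2^{-n}`, `d((n,x),(n,y)) = d_{Kₙ}(x,y)` and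
`d((n,x),(m,y)) = |2^{-n} - 2^{-m}|` for `n ≠ m`. If each `Kₙ` satisfies `Kₙ'' = ∅` and
`Kₙ' ≠ ∅` for infinitely many `n`, then `K'' = {0}`. -/
theorem second_derived_set_eq_singleton (K : ℕ → Type*) [∀ n, MetricSpace (K n)]
    (hdiam : ∀ n, Metric.diam (Set.univ : Set (K n)) ≤ (8:ℝ)⁻¹ ^ n)
    (X : Type*) [MetricSpace X] (e : Option ((n : ℕ) × K n) ≃ X)
    (hdist0 : ∀ (n : ℕ) (x : K n), dist (e none) (e (some ⟨n, x⟩)) = (2:ℝ)⁻¹ ^ n)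
    (hdist1 : ∀ (n : ℕ) (x y : K n), dist (e (some ⟨n, x⟩)) (e (some ⟨n, y⟩)) = dist x y)
    (hdist2 : ∀ (n p : ℕ) (x : K n) (y : K p), n ≠ p →
      dist (e (some ⟨n, x⟩)) (e (some ⟨p, y⟩)) = |(2:ℝ)⁻¹ ^ n - (2:ℝ)⁻¹ ^ p|)
    (hKn'' : ∀ n, derivedSet (derivedSet (Set.univ : Set (K n))) = ∅)
    (hKn' : {n : ℕ | (derivedSet (Set.univ : Set (K n))).Nonempty}.Infinite) :
    derivedSet (derivedSet (Set.univ : Set X)) = {e none} := by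
  have two_pos : ∀ k : ℕ, (0:ℝ) < (2:ℝ)⁻¹ ^ k := fun k => pow_pos (by norm_num) k
  -- any point close to a point of component `n` lies in component `n`
  have near : ∀ (n : ℕ) (x : K n) (y : X), dist y (e (some ⟨n, x⟩)) < (2:ℝ)⁻¹ ^ (n + 1) →
      ∃ z : K n, y = e (some ⟨n, z⟩) ∧ dist z x = dist y (e (some ⟨n, x⟩)) := by
    intro n x y hy
    obtain ⟨o, rfl⟩ := e.surjective y
    rcases o with _ | ⟨m, z⟩
    · exfalso
      rw [hdist0] at hy
      have h1 : (2:ℝ)⁻¹ ^ (n + 1) ≤ (2:ℝ)⁻¹ ^ n := half_pow_mono (Nat.le_succ n)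
      linarith
    · rcases eq_or_ne m n with rfl | hmn
      · exact ⟨z, rfl, by rw [hdist1]⟩
      · exfalso
        rw [hdist2 m n z x hmn] at hy
        have hg := half_pow_gap (n := n) (m := m) hmn.symm
        rw [abs_sub_comm] at hg
        linarith
  -- characterization of the first derived set on components
  have keyA : ∀ (n : ℕ) (x : K n),
      e (some ⟨n, x⟩) ∈ derivedSet (univ : Set X) ↔ x ∈ derivedSet (univ : Set (K n)) := by
    intro n x
    rw [mem_derivedSet_metric, mem_derivedSet_metric]
    constructor
    · intro h ε hε
      obtain ⟨y, -, hy2, hy3⟩ := h (min ε ((2:ℝ)⁻¹ ^ (n + 1))) (lt_min hε (two_pos _))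
      obtain ⟨z, rfl, hz⟩ := near n x y (lt_of_lt_of_le hy3 (min_le_right _ _))
      refine ⟨z, trivial, fun hzx => hy2 (by rw [hzx]), ?_⟩
      rw [hz]; exact lt_of_lt_of_le hy3 (min_le_left _ _)
    · intro h ε hε
      obtain ⟨z, -, hz2, hz3⟩ := h ε hε
      refine ⟨e (some ⟨n, z⟩), trivial, fun hh => hz2 ?_, by rwa [hdist1]⟩
      simpa using e.injective hh
  -- no component point is in the second derived set
  have keyB : ∀ (n : ℕ) (x : K n), e (some ⟨n, x⟩) ∉ derivedSet (derivedSet (univ : Set X)) := by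
    intro n x hx
    have hmem : x ∈ derivedSet (derivedSet (univ : Set (K n))) := by
      rw [mem_derivedSet_metric]
      intro ε hε
      rw [mem_derivedSet_metric] at hx
      obtain ⟨y, hy1, hy2, hy3⟩ := hx (min ε ((2:ℝ)⁻¹ ^ (n + 1))) (lt_min hε (two_pos _))
      obtain ⟨z, rfl, hz⟩ := near n x y (lt_of_lt_of_le hy3 (min_le_right _ _))
      exact ⟨z, (keyA n z).1 hy1, fun h => hy2 (by rw [h]),
        hz ▸ lt_of_lt_of_le hy3 (min_le_left _ _)⟩
    rw [hKn'' n] at hmem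
    exact hmem
  -- the point `0` is in the second derived set
  have h0 : e none ∈ derivedSet (derivedSet (univ : Set X)) := by
    rw [mem_derivedSet_metric]
    intro ε hε
    obtain ⟨N, hN⟩ := exists_pow_lt_of_lt_one hε (show (2:ℝ)⁻¹ < 1 by norm_num)
    obtain ⟨n, hn1, hn2⟩ := hKn'.exists_gt N
    obtain ⟨x, hx⟩ := hn1
    refine ⟨e (some ⟨n, x⟩), (keyA n x).2 hx,
      fun h => Option.some_ne_none _ (e.injective h), ?_⟩
    rw [dist_comm, hdist0]
    exact lt_of_le_of_lt (half_pow_mono hn2.le) hN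
  -- conclusion
  ext y
  simp only [mem_singleton_iff]
  constructor
  · intro hy
    obtain ⟨o, rfl⟩ := e.surjective y
    rcases o with _ | ⟨n, x⟩
    · rfl
    · exact absurd hy (keyB n x)
  · rintro rfl
    exact h0
end
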